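/- arXiv:2201.06172 — 3 statements merged into one kernel-verified Lean document; each statement's English description precedes it below -/
import Mathlib

section
/- Let q be a prime power, let d be a positive integer, and let c ∈ GF(q) with c ≠ 1. Let N_4 denote the number of quadruples (x_1, x_2, x_3, x_4) ∈ GF(q)^4 satisfying x_1 − x_2 + x_3 − x_4 = 0 and x_1^d − c·x_2^d + c·x_3^d − x_4^d = 0. Then Σ_{i=0}^{q} i²·ω_i = (N_4 − 1)/(q − 1) − gcd(d, q − 1), where ω_i are the c-differential spectrum values of F(x) = x^d. -/
/-!
Both sides count collisions. `∑ i² ω_i = ∑_b δ_c(b)²` is the number of pairs `(x, y)` with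
`Δ_c(x) = Δ_c(y)`. Writing a solution of the two equations defining `N₄` as
`(x + t, x, y, y + t)`, `N₄` is the sum over `t` of the number of pairs with
`(x+t)^d - c x^d = (y+t)^d - c y^d`. For `t ≠ 0` the substitution `x ↦ t x` turns this into the
collision count of `Δ_c`; for `t = 0` it counts pairs with `x^d = y^d` (as `c ≠ 1`), of which
there are `1 + (q - 1) gcd(d, q - 1)`, since `x ↦ x^d` is `gcd(d, q - 1)`-to-one on the cyclic
group `GF(q)ˣ`.
-/

open Finset

/-- `cdelta F d c b` is the number of `x` in the finite field `F` with
`(x+1)^d - c * x^d = b`, i.e. the entry `δ_c(b)` of the `c`-DDT of `x ↦ x^d`. -/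
noncomputable def cdelta (F : Type*) [Field F] (d : ℕ) (c b : F) : ℕ :=
  Nat.card {x : F // (x + 1) ^ d - c * x ^ d = b}

/-- `comega F d c i` is the number of `b` in `F` with `δ_c(b) = i`,
i.e. the value `ω_i` of the `c`-differential spectrum of `x ↦ x^d`. -/
noncomputable def comega (F : Type*) [Field F] (d : ℕ) (c : F) (i : ℕ) : ℕ :=
  Nat.card {b : F // cdelta F d c b = i}

open scoped Classical in
/-- The quadratic character of `F`, valued in `ℤ`. -/
noncomputable def chi (F : Type*) [Field F] (x : F) : ℤ :=
  if x = 0 then 0 else if IsSquare x then 1 else -1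

section Collisions

variable {α β : Type*} [Fintype α] [DecidableEq β]

def collisions (f : α → β) : Finset (α × α) := {p | f p.1 = f p.2}

theorem card_filter_prod_eq_sum {γ : Type*} [Fintype γ] (P : α → γ → Prop)
    [∀ a, DecidablePred (P a)] : #{w : α × γ | P w.1 w.2} = ∑ a, #{b | P a b} := by
  simp only [card_filter, Fintype.sum_prod_type]

theorem card_collisions_eq_sum_card (f : α → β) :
    #(collisions f) = ∑ a, #{b | f a = f b} :=
  card_filter_prod_eq_sum fun a b => f a = f b

theorem card_collisions_eq_sum_sq [Fintype β] (f : α → β) :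
    #(collisions f) = ∑ b, #{a | f a = b} ^ 2 := by
  rw [card_eq_sum_card_fiberwise (f := fun p => f p.1) (t := univ) fun _ _ => mem_univ _]
  refine sum_congr rfl fun b _ => ?_
  rw [sq, ← card_product]
  congr 1
  ext ⟨x, y⟩
  simp only [collisions, mem_filter, mem_univ, true_and, mem_product]
  grind

theorem collisions_comp_of_injective {γ : Type*} [DecidableEq γ] (f : α → β) {g : β → γ}
    (hg : Function.Injective g) : collisions (g ∘ f) = collisions f := by
  ext p
  simp [collisions, hg.eq_iff]

theorem card_collisions_comp_equiv (f : α → β) (e : α ≃ α) :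
    #(collisions (f ∘ e)) = #(collisions f) := by
  refine card_bij' (fun p _ => (e p.1, e p.2)) (fun p _ => (e.symm p.1, e.symm p.2)) ?_ ?_ ?_ ?_
  all_goals simp [collisions]

end Collisions

theorem sum_range_mul_card_filter_eq {β R : Type*} [Fintype β] [CommSemiring R] (g : β → ℕ)
    {N : ℕ} (hg : ∀ b, g b ≤ N) (h : ℕ → R) :
    ∑ i ∈ range (N + 1), h i * #{b | g b = i} = ∑ b, h (g b) := by
  rw [← sum_fiberwise_of_maps_to (g := g) (t := range (N + 1))
    fun b _ => mem_range.mpr (Nat.lt_succ_of_le (hg b))]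
  refine sum_congr rfl fun i _ => ?_
  rw [sum_congr rfl fun b hb => congrArg h (mem_filter.mp hb).2, sum_const, nsmul_eq_mul,
    mul_comm]

section CDiff

variable {R : Type*} [CommRing R]

/-- The paper's `Δ_c` is `cDiff d c 1`. -/
def cDiff (d : ℕ) (c t x : R) : R := (x + t) ^ d - c * x ^ d

theorem cDiff_mul_left (d : ℕ) (c t x : R) :
    cDiff d c t (t * x) = t ^ d * cDiff d c 1 x := by
  simp only [cDiff]
  rw [show t * x + t = t * (x + 1) by ring, mul_pow, mul_pow]
  ring

theorem cDiff_zero (d : ℕ) (c : R) :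
    cDiff d c 0 = ((1 - c) * ·) ∘ (· ^ d) := by
  funext x
  simp only [cDiff, add_zero, Function.comp_apply]
  ring

theorem card_quadruples_eq_sum_card_collisions [Fintype R] [DecidableEq R] (d : ℕ) (c : R) :
    Nat.card {v : R × R × R × R // v.1 - v.2.1 + v.2.2.1 - v.2.2.2 = 0 ∧
      v.1 ^ d - c * v.2.1 ^ d + c * v.2.2.1 ^ d - v.2.2.2 ^ d = 0} =
    ∑ t, #(collisions (cDiff d c t)) := by
  unfold collisions
  rw [← card_filter_prod_eq_sum (fun t (p : R × R) => cDiff d c t p.1 = cDiff d c t p.2),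
    ← Fintype.card_subtype, ← Nat.card_eq_fintype_card]
  refine Nat.card_congr
    { toFun := fun v => ⟨(v.1.1 - v.1.2.1, v.1.2.1, v.1.2.2.1), ?_⟩
      invFun := fun w => ⟨(w.1.2.1 + w.1.1, w.1.2.1, w.1.2.2, w.1.2.2 + w.1.1), ?_⟩
      left_inv := ?_
      right_inv := ?_ }
  · obtain ⟨⟨x₁, x₂, x₃, x₄⟩, hsum, hpow⟩ := v
    simp only [cDiff]
    rw [show x₂ + (x₁ - x₂) = x₁ by ring, show x₃ + (x₁ - x₂) = x₄ by linear_combination hsum]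
    linear_combination hpow
  · obtain ⟨⟨t, x, y⟩, h⟩ := w
    simp only [cDiff] at h
    exact ⟨by ring, by linear_combination h⟩
  · rintro ⟨⟨x₁, x₂, x₃, x₄⟩, hsum, -⟩
    dsimp only at hsum
    ext <;> dsimp only
    · ring
    · linear_combination hsum
  · rintro ⟨⟨t, x, y⟩, -⟩
    ext <;> dsimp only
    ring

end CDiff

section FiniteField

variable {F : Type*} [Field F] [Fintype F] [DecidableEq F]

theorem card_pow_eq_one_eq_gcd {d : ℕ} (hd : 0 < d) :
    #{z : F | z ^ d = 1} = d.gcd (Fintype.card F - 1) := by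
  have : NeZero d := ⟨hd.ne'⟩
  rw [← Fintype.card_subtype, ← Nat.card_eq_fintype_card, Nat.gcd_comm, ← Fintype.card_units,
    ← Nat.card_eq_fintype_card, ← IsCyclic.card_powMonoidHom_ker, ← rootsOfUnity_eq_ker,
    Nat.card_congr (rootsOfUnityEquivNthRoots F d)]
  exact Nat.card_congr (Equiv.subtypeEquivRight fun z => (Polynomial.mem_nthRoots hd).symm)

theorem card_pow_eq_pow_of_ne_zero {d : ℕ} {x : F} (hx : x ≠ 0) :
    #{y : F | x ^ d = y ^ d} = #{z : F | z ^ d = 1} := by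
  refine card_bij' (fun y _ => x⁻¹ * y) (fun z _ => x * z) ?_ ?_ ?_ ?_
  all_goals intro y; simp [mul_pow, hx, inv_mul_eq_one₀]

theorem card_collisions_pow {d : ℕ} (hd : 0 < d) :
    #(collisions (· ^ d : F → F)) = 1 + (Fintype.card F - 1) * d.gcd (Fintype.card F - 1) := by
  rw [card_collisions_eq_sum_card, ← add_sum_erase _ _ (mem_univ 0),
    sum_congr rfl fun x hx => (card_pow_eq_pow_of_ne_zero (ne_of_mem_erase hx)).trans
      (card_pow_eq_one_eq_gcd hd), sum_const, card_erase_of_mem (mem_univ _), card_univ,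
    smul_eq_mul]
  simp [zero_pow hd.ne', eq_comm, pow_eq_zero_iff hd.ne', filter_eq']

theorem card_collisions_cDiff_of_ne_zero (d : ℕ) (c : F) {t : F} (ht : t ≠ 0) :
    #(collisions (cDiff d c t)) = #(collisions (cDiff d c 1)) := by
  have hscale : cDiff d c t ∘ Equiv.mulLeft₀ t ht = (t ^ d * ·) ∘ cDiff d c 1 :=
    funext fun x => cDiff_mul_left d c t x
  rw [← card_collisions_comp_equiv _ (Equiv.mulLeft₀ t ht), hscale,
    collisions_comp_of_injective _ (mul_right_injective₀ (pow_ne_zero d ht))]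

theorem card_collisions_cDiff_zero {d : ℕ} (hd : 0 < d) {c : F} (hc : c ≠ 1) :
    #(collisions (cDiff d c 0)) = 1 + (Fintype.card F - 1) * d.gcd (Fintype.card F - 1) := by
  rw [cDiff_zero, collisions_comp_of_injective _ (mul_right_injective₀ (sub_ne_zero.mpr hc.symm)),
    card_collisions_pow hd]

theorem cdelta_eq_card (d : ℕ) (c b : F) : cdelta F d c b = #{x | cDiff d c 1 x = b} := by
  rw [cdelta, Nat.card_eq_fintype_card, Fintype.card_subtype]
  rfl

theorem comega_eq_card (d : ℕ) (c : F) (i : ℕ) :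
    comega F d c i = #{b | #{x | cDiff d c 1 x = b} = i} := by
  simp only [comega, cdelta_eq_card, Nat.card_eq_fintype_card, Fintype.card_subtype]

theorem sum_sq_mul_comega (d : ℕ) (c : F) :
    ∑ i ∈ range (Fintype.card F + 1), (i : ℤ) ^ 2 * comega F d c i =
      #(collisions (cDiff d c 1)) := by
  simp only [comega_eq_card]
  rw [sum_range_mul_card_filter_eq _ (fun b => card_le_univ _), card_collisions_eq_sum_sq]
  push_cast
  rfl

end FiniteField

theorem stmt_1_general (q : ℕ)
    (F : Type*) [Field F] [Fintype F] (hF : Fintype.card F = q)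
    (d : ℕ) (hd : 0 < d) (c : F) (hc : c ≠ 1)
    (N4 : ℕ)
    (hN4 : N4 = Nat.card {v : F × F × F × F //
      v.1 - v.2.1 + v.2.2.1 - v.2.2.2 = 0 ∧
      v.1 ^ d - c * v.2.1 ^ d + c * v.2.2.1 ^ d - v.2.2.2 ^ d = 0}) :
    ((∑ i ∈ Finset.range (q + 1), (i : ℤ) ^ 2 * comega F d c i) + Nat.gcd d (q - 1)) *
      ((q : ℤ) - 1) = (N4 : ℤ) - 1 := by
  classical
  subst hF hN4
  rw [sum_sq_mul_comega, card_quadruples_eq_sum_card_collisions,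
    ← add_sum_erase _ _ (mem_univ 0), card_collisions_cDiff_zero hd hc,
    sum_congr rfl fun t ht => card_collisions_cDiff_of_ne_zero d c (ne_of_mem_erase ht),
    sum_const, card_erase_of_mem (mem_univ _), card_univ, smul_eq_mul]
  push_cast [Nat.cast_sub Fintype.card_pos]
  ring

theorem stmt_1 (p n : ℕ) (hp : p.Prime) (hn : 1 ≤ n) (q : ℕ) (hq : q = p ^ n)
    (F : Type*) [Field F] [Fintype F] (hF : Fintype.card F = q)
    (d : ℕ) (hd : 0 < d) (c : F) (hc : c ≠ 1)
    (N4 : ℕ)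
    (hN4 : N4 = Nat.card {v : F × F × F × F //
      v.1 - v.2.1 + v.2.2.1 - v.2.2.2 = 0 ∧
      v.1 ^ d - c * v.2.1 ^ d + c * v.2.2.1 ^ d - v.2.2.2 ^ d = 0}) :
    ((∑ i ∈ Finset.range (q + 1), (i : ℤ) ^ 2 * comega F d c i) + Nat.gcd d (q - 1)) *
      ((q : ℤ) - 1) = (N4 : ℤ) - 1 :=
  stmt_1_general q F hF d hd c hc N4 hN4
end

section
/- Let n ≥ 1 and let F(x) = x^{2^n − 2} be the inverse power function over GF(2^n). Let c ∈ GF(2^n) with c ≠ 0 and c ≠ 1, and suppose that exactly one of Tr(c) and Tr(c^{-1}) equals 0 (i.e., Tr(c) = 1, Tr(c^{-1}) = 0 or Tr(c) = 0, Tr(c^{-1}) = 1), where Tr is the absolute trace from GF(2^n) to GF(2). Then the c-differential spectrum of F is given by ω_0 = 2^{n−1} − 1, ω_1 = 3, ω_2 = 2^{n−1} − 3, ω_3 = 1, and ω_i = 0 for i ≥ 4; in particular F is differentially (c,3)-uniform. -/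
open Finset

/-!
For `x ∉ {0, 1}` the equation `(x + 1)⁻¹ - c x⁻¹ = b` is equivalent, in characteristic `2`, to
`b x² + (b + c + 1) x + c = 0`, while `x = 0` and `x = 1` only solve it for `b = 1` and `b = c`.
A quadratic `a x² + p x + q` with `a p ≠ 0` over `GF(2ⁿ)` has two roots if `Tr (a q / p²) = 0` and
none otherwise, because the image of the additive map `y ↦ y² + y` (with kernel `{0, 1}`) is the
kernel of the trace. Hence `δ(0) = δ(c + 1) = 1`, `δ(1) = 1 + 2 [Tr c⁻¹ = 0]`,
`δ(c) = 1 + 2 [Tr c = 0]`, and `δ(b) ∈ {0, 2}` for all other `b`. Under the trace hypothesis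
exactly one of `δ(1)`, `δ(c)` is `3`, and the identities `∑ ω_i = 2ⁿ = ∑ i ω_i` determine
`ω₀` and `ω₂`.
-/

section ArtinSchreier

variable {F : Type*} [Field F]

theorem trace_sq_eq [Fintype F] [Algebra (ZMod 2) F] (x : F) :
    Algebra.trace (ZMod 2) F (x ^ 2) = Algebra.trace (ZMod 2) F x :=
  Algebra.trace_eq_of_algEquiv (FiniteField.frobeniusAlgEquivOfAlgebraic (ZMod 2) F) x

variable [CharP F 2]

variable (F) in
def artinSchreier : F →+ F where
  toFun y := y ^ 2 + y
  map_zero' := by simp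
  map_add' x y := by simp only [CharTwo.add_sq]; ring

theorem artinSchreier_apply (y : F) : artinSchreier F y = y ^ 2 + y := rfl

theorem artinSchreier_eq_artinSchreier_iff {y z : F} :
    artinSchreier F y = artinSchreier F z ↔ y = z ∨ y = z + 1 := by
  have h2 : (2 : F) = 0 := CharTwo.two_eq_zero
  rw [← CharTwo.add_eq_zero (a := y), ← CharTwo.add_eq_zero (a := y), ← mul_eq_zero,
    ← CharTwo.add_eq_zero, artinSchreier_apply, artinSchreier_apply]
  constructor <;> intro h
  · linear_combination h + y * z * h2
  · linear_combination h - y * z * h2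

theorem card_ker_artinSchreier : Nat.card (artinSchreier F).ker = 2 := by
  rw [Nat.card_eq_two_iff]
  have h1 : (1 : F) ∈ (artinSchreier F).ker := by
    simp [artinSchreier_apply, CharTwo.add_self_eq_zero]
  refine ⟨⟨0, zero_mem _⟩, ⟨1, h1⟩, by simp, ?_⟩
  ext ⟨y, hy⟩
  have : y = 0 ∨ y = 0 + 1 := artinSchreier_eq_artinSchreier_iff.1
    ((AddMonoidHom.mem_ker.1 hy).trans (map_zero _).symm)
  simpa using this

variable [Fintype F] [Algebra (ZMod 2) F]

theorem range_artinSchreier :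
    (artinSchreier F).range = (Algebra.trace (ZMod 2) F : F →+ ZMod 2).ker := by
  refine AddSubgroup.eq_of_le_of_card_ge ?_ ?_
  · rintro _ ⟨y, rfl⟩
    simp [AddMonoidHom.mem_ker, artinSchreier_apply, trace_sq_eq, CharTwo.add_self_eq_zero]
  · have hTr := (Algebra.trace (ZMod 2) F : F →+ ZMod 2).ker.card_mul_index
    have hAS := (artinSchreier F).ker.card_mul_index
    rw [AddSubgroup.index_ker, AddMonoidHom.range_eq_top.2 (Algebra.trace_surjective (ZMod 2) F),
      AddSubgroup.card_top, Nat.card_zmod] at hTr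
    rw [AddSubgroup.index_ker, card_ker_artinSchreier] at hAS
    omega

theorem card_filter_sq_add_self_eq [DecidableEq F] (a : F) :
    #{y | y ^ 2 + y = a} = if Algebra.trace (ZMod 2) F a = 0 then 2 else 0 := by
  have hmem : a ∈ (artinSchreier F).range ↔ Algebra.trace (ZMod 2) F a = 0 := by
    rw [range_artinSchreier]
    rfl
  split_ifs with ha
  · obtain ⟨y₀, rfl⟩ := hmem.2 ha
    rw [card_eq_two]
    refine ⟨y₀, y₀ + 1, by simp, ?_⟩
    ext y
    simp only [mem_filter, mem_univ, true_and, mem_insert, mem_singleton]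
    exact artinSchreier_eq_artinSchreier_iff
  · rw [card_eq_zero, filter_eq_empty_iff]
    exact fun y _ hy => ha (hmem.1 ⟨y, hy⟩)

end ArtinSchreier

section Quadratic

variable {F : Type*} [Field F] [Fintype F] [DecidableEq F]

theorem card_filter_mul_add_eq_zero {p : F} (hp : p ≠ 0) (q : F) :
    #{x | p * x + q = 0} = 1 := by
  rw [card_eq_one]
  refine ⟨-q / p, ?_⟩
  ext x
  simp only [mem_filter, mem_univ, true_and, mem_singleton]
  rw [eq_div_iff hp, ← add_eq_zero_iff_eq_neg, mul_comm]

variable [CharP F 2]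

theorem card_filter_mul_sq_add_eq_zero {a : F} (ha : a ≠ 0) (q : F) :
    #{x | a * x ^ 2 + q = 0} = 1 := by
  obtain ⟨r, hr⟩ := FiniteField.isSquare_of_char_two (ringChar.eq F 2) (q / a)
  rw [card_eq_one]
  refine ⟨r, ?_⟩
  ext x
  simp only [mem_filter, mem_univ, true_and, mem_singleton]
  rw [CharTwo.add_eq_zero, mul_comm, ← eq_div_iff ha, hr, ← sq, CharTwo.sq_inj]

variable [Algebra (ZMod 2) F]

theorem card_filter_quadratic_eq {a p : F} (ha : a ≠ 0) (hp : p ≠ 0) (q : F) :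
    #{x | a * x ^ 2 + p * x + q = 0} =
      if Algebra.trace (ZMod 2) F (a * q / p ^ 2) = 0 then 2 else 0 := by
  have key (x : F) :
      a * x ^ 2 + p * x + q = 0 ↔ (a * x / p) ^ 2 + a * x / p = a * q / p ^ 2 := by
    have hfactor : (a * x / p) ^ 2 + a * x / p + a * q / p ^ 2
        = a / p ^ 2 * (a * x ^ 2 + p * x + q) := by
      field_simp
    rw [iff_comm, ← CharTwo.add_eq_zero, hfactor, mul_eq_zero]
    simp [ha, hp]
  rw [← card_filter_sq_add_self_eq]
  refine card_nbij' (fun x => a * x / p) (fun y => p * y / a) ?_ ?_ ?_ ?_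
  · intro x hx
    simp only [coe_filter, mem_univ, true_and, Set.mem_ofPred_eq] at hx ⊢
    exact (key x).1 hx
  · intro y hy
    simp only [coe_filter, mem_univ, true_and, Set.mem_ofPred_eq] at hy ⊢
    rwa [key, show a * (p * y / a) / p = y by field_simp]
  · intro x _
    field_simp
  · intro y _
    field_simp

end Quadratic

section FiberCounting

variable {α : Type*}

theorem card_eq_sum_card_filter_eq [Fintype α] (g : α → ℕ) {N : ℕ} (hg : ∀ b, g b < N) :
    Fintype.card α = ∑ i ∈ range N, #{b | g b = i} := by
  rw [← card_univ]
  exact card_eq_sum_card_fiberwise fun b _ => mem_range.2 (hg b)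

theorem sum_eq_sum_mul_card_filter_eq [Fintype α] (g : α → ℕ) {N : ℕ} (hg : ∀ b, g b < N) :
    ∑ b, g b = ∑ i ∈ range N, i * #{b | g b = i} := by
  rw [← sum_fiberwise_of_maps_to fun b _ => mem_range.2 (hg b)]
  refine sum_congr rfl fun i _ => ?_
  rw [sum_congr rfl fun b hb => (mem_filter.1 hb).2, sum_const, smul_eq_mul, mul_comm]

variable {g : α → ℕ} {E : Finset α} {a : α}

theorem le_three_of_eq_three_of_eq_one (ha : g a = 3) (hE : ∀ b ∈ E, b ≠ a → g b = 1)
    (hcompl : ∀ b ∉ E, g b = 0 ∨ g b = 2) (b : α) : g b ≤ 3 := by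
  by_cases hba : b = a
  · exact hba ▸ ha.le
  by_cases hbE : b ∈ E
  · have := hE b hbE hba
    omega
  · have := hcompl b hbE
    omega

variable [Fintype α] [DecidableEq α]

theorem filter_eq_one_eq_erase (ha : g a = 3) (hE : ∀ b ∈ E, b ≠ a → g b = 1)
    (hcompl : ∀ b ∉ E, g b = 0 ∨ g b = 2) : ({b | g b = 1} : Finset α) = E.erase a := by
  ext b
  simp only [mem_filter, mem_univ, true_and, mem_erase]
  refine ⟨fun hb => ⟨?_, ?_⟩, fun hb => hE b hb.2 hb.1⟩
  · rintro rfl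
    omega
  · by_contra hbE
    have := hcompl b hbE
    omega

theorem filter_eq_three_eq_singleton (ha : g a = 3) (hE : ∀ b ∈ E, b ≠ a → g b = 1)
    (hcompl : ∀ b ∉ E, g b = 0 ∨ g b = 2) : ({b | g b = 3} : Finset α) = {a} := by
  ext b
  simp only [mem_filter, mem_univ, true_and, mem_singleton]
  refine ⟨fun hb => ?_, fun hb => hb ▸ ha⟩
  by_contra hba
  by_cases hbE : b ∈ E
  · have := hE b hbE hba
    omega
  · have := hcompl b hbE
    omega

end FiberCounting

section CharTwo

variable {F : Type*} [Field F] [CharP F 2] {c : F}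

theorem add_one_ne_zero_of_ne_one {x : F} (hx : x ≠ 1) : x + 1 ≠ 0 :=
  mt CharTwo.add_eq_zero.1 hx

theorem inv_add_one_sub_mul_inv_eq_iff (hc : c ≠ 0) (x b : F) :
    (x + 1)⁻¹ - c * x⁻¹ = b ↔
      x = 0 ∧ b = 1 ∨ x = 1 ∧ b = c ∨ b * x ^ 2 + (b + c + 1) * x + c = 0 := by
  have h2 : (2 : F) = 0 := CharTwo.two_eq_zero
  rcases eq_or_ne x 0 with rfl | hx0
  · simp [hc, eq_comm]
  rcases eq_or_ne x 1 with rfl | hx1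
  · have h : b + (b + c + 1) + c = 1 := by linear_combination (b + c) * h2
    simp [CharTwo.add_self_eq_zero, CharTwo.neg_eq, eq_comm, h]
  have hfrac : (x + 1)⁻¹ - c * x⁻¹ + b
      = (b * x ^ 2 + (b + c + 1) * x + c) / (x * (x + 1)) := by
    field_simp [add_one_ne_zero_of_ne_one hx1]
    linear_combination -(x * c + c) * h2
  rw [← CharTwo.add_eq_zero, hfrac, div_eq_zero_iff]
  simp [hx0, hx1, add_one_ne_zero_of_ne_one hx1]

theorem card_zero_one_self_add_one [DecidableEq F] (hc0 : c ≠ 0) (hc1 : c ≠ 1) :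
    #({0, 1, c, c + 1} : Finset F) = 4 := by
  have h1c1 : 1 ≠ c + 1 := fun h => hc0 (by simpa using h.symm)
  rw [card_insert_of_notMem (by simp [hc0.symm, (add_one_ne_zero_of_ne_one hc1).symm]),
    card_insert_of_notMem (by simp [Ne.symm hc1, h1c1]), card_pair (by simp)]

end CharTwo

section InverseCDelta

variable {F : Type*} [Field F] [Fintype F]

theorem comega_eq_card_filter (d : ℕ) (c : F) (i : ℕ) :
    comega F d c i = #{b | cdelta F d c b = i} := by
  rw [comega, Nat.card_eq_fintype_card, Fintype.card_subtype]

/- The bound excludes `GF(2)`, where the exponent is `0` and `0 ^ 0 = 1 ≠ 0⁻¹`. -/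
theorem pow_card_sub_two_eq_inv (h : 2 < Fintype.card F) (x : F) :
    x ^ (Fintype.card F - 2) = x⁻¹ := by
  rcases eq_or_ne x 0 with rfl | hx
  · rw [zero_pow (by omega), inv_zero]
  · refine eq_inv_of_mul_eq_one_left ?_
    rw [← pow_succ, show Fintype.card F - 2 + 1 = Fintype.card F - 1 by omega,
      FiniteField.pow_card_sub_one_eq_one x hx]

variable [DecidableEq F]

theorem cdelta_eq_card_filter (d : ℕ) (c b : F) :
    cdelta F d c b = #{x | (x + 1) ^ d - c * x ^ d = b} := by
  rw [cdelta, Nat.card_eq_fintype_card, Fintype.card_subtype]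

def invCDelta (c b : F) : ℕ := #{x | (x + 1)⁻¹ - c * x⁻¹ = b}

theorem cdelta_card_sub_two (h : 2 < Fintype.card F) (c b : F) :
    cdelta F (Fintype.card F - 2) c b = invCDelta c b := by
  simp only [cdelta_eq_card_filter, pow_card_sub_two_eq_inv h, invCDelta]

theorem sum_invCDelta (c : F) : ∑ b, invCDelta c b = Fintype.card F :=
  (card_eq_sum_card_fiberwise fun _ _ => mem_univ _).symm

variable [CharP F 2] {c : F}

theorem invCDelta_eq (hc : c ≠ 0) (b : F) :
    invCDelta c b = (if b = 1 then 1 else 0) + (if b = c then 1 else 0)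
      + #{x | b * x ^ 2 + (b + c + 1) * x + c = 0} := by
  have h2 : (2 : F) = 0 := CharTwo.two_eq_zero
  have hroot0 : ¬ b * 0 ^ 2 + (b + c + 1) * 0 + c = 0 := by simpa using hc
  have hroot1 : ¬ b * 1 ^ 2 + (b + c + 1) * 1 + c = 0 := fun h =>
    one_ne_zero (α := F) (by linear_combination -h + (b + c + 1) * h2)
  simp_rw [invCDelta, inv_add_one_sub_mul_inv_eq_iff hc, filter_or]
  rw [card_union_of_disjoint, card_union_of_disjoint, ← add_assoc]
  · congr 2 <;> split_ifs with h <;> simp [h, filter_eq']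
  · refine disjoint_filter.2 ?_
    rintro x - ⟨rfl, -⟩
    exact hroot1
  · rw [← filter_or]
    refine disjoint_filter.2 ?_
    rintro x - ⟨rfl, -⟩ (⟨h, -⟩ | h)
    exacts [zero_ne_one h, hroot0 h]

theorem invCDelta_zero (hc0 : c ≠ 0) (hc1 : c ≠ 1) : invCDelta c 0 = 1 := by
  rw [invCDelta_eq hc0, if_neg zero_ne_one, if_neg hc0.symm]
  simpa using card_filter_mul_add_eq_zero (add_one_ne_zero_of_ne_one hc1) c

theorem invCDelta_add_one (hc0 : c ≠ 0) (hc1 : c ≠ 1) : invCDelta c (c + 1) = 1 := by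
  have hlin : c + 1 + c + 1 = 0 := by
    linear_combination (c + 1) * CharTwo.two_eq_zero (R := F)
  rw [invCDelta_eq hc0, if_neg (by simpa using hc0), if_neg (by simp), hlin]
  simpa using card_filter_mul_sq_add_eq_zero (add_one_ne_zero_of_ne_one hc1) c

variable [Algebra (ZMod 2) F]

theorem invCDelta_one (hc0 : c ≠ 0) (hc1 : c ≠ 1) :
    invCDelta c 1 = if Algebra.trace (ZMod 2) F c⁻¹ = 0 then 3 else 1 := by
  have hlin : 1 + c + 1 = c := by
    linear_combination CharTwo.two_eq_zero (R := F)
  rw [invCDelta_eq hc0, if_pos rfl, if_neg (Ne.symm hc1), hlin,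
    card_filter_quadratic_eq one_ne_zero hc0, one_mul, sq, div_mul_cancel_left₀ hc0]
  split_ifs <;> rfl

theorem invCDelta_self (hc0 : c ≠ 0) (hc1 : c ≠ 1) :
    invCDelta c c = if Algebra.trace (ZMod 2) F c = 0 then 3 else 1 := by
  have hlin : c + c + 1 = 1 := by
    linear_combination c * CharTwo.two_eq_zero (R := F)
  rw [invCDelta_eq hc0, if_neg hc1, if_pos rfl, hlin,
    card_filter_quadratic_eq hc0 one_ne_zero, one_pow, div_one, ← sq, trace_sq_eq]
  split_ifs <;> rfl

theorem invCDelta_of_notMem (hc0 : c ≠ 0) {b : F} (hb : b ∉ ({0, 1, c, c + 1} : Finset F)) :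
    invCDelta c b = 0 ∨ invCDelta c b = 2 := by
  simp only [mem_insert, mem_singleton, not_or] at hb
  obtain ⟨hb0, hb1, hbc, hbc1⟩ := hb
  have hlin : b + c + 1 ≠ 0 := by
    rw [add_assoc]
    exact mt CharTwo.add_eq_zero.1 hbc1
  rw [invCDelta_eq hc0, if_neg hb1, if_neg hbc, card_filter_quadratic_eq hb0 hlin]
  split_ifs <;> simp

theorem exists_invCDelta_eq_three (hc0 : c ≠ 0) (hc1 : c ≠ 1)
    (htr : (Algebra.trace (ZMod 2) F c = 1 ∧ Algebra.trace (ZMod 2) F c⁻¹ = 0) ∨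
      (Algebra.trace (ZMod 2) F c = 0 ∧ Algebra.trace (ZMod 2) F c⁻¹ = 1)) :
    ∃ a ∈ ({0, 1, c, c + 1} : Finset F), invCDelta c a = 3 ∧
      ∀ b ∈ ({0, 1, c, c + 1} : Finset F), b ≠ a → invCDelta c b = 1 := by
  have h0 := invCDelta_zero hc0 hc1
  have h1 := invCDelta_one hc0 hc1
  have hc := invCDelta_self hc0 hc1
  have hc1' := invCDelta_add_one hc0 hc1
  simp only [mem_insert, mem_singleton]
  rcases htr with ⟨htc, htci⟩ | ⟨htc, htci⟩
  · refine ⟨1, by simp, by simp [h1, htci], ?_⟩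
    rintro b (rfl | rfl | rfl | rfl) hb
    exacts [h0, (hb rfl).elim, by simp [hc, htc], hc1']
  · refine ⟨c, by simp, by simp [hc, htc], ?_⟩
    rintro b (rfl | rfl | rfl | rfl) hb
    exacts [h0, by simp [h1, htci], (hb rfl).elim, hc1']

end InverseCDelta

theorem stmt_3 (n : ℕ) (hn : 1 ≤ n)
    (c : GaloisField 2 n) (hc0 : c ≠ 0) (hc1 : c ≠ 1)
    (htr : (Algebra.trace (ZMod 2) (GaloisField 2 n) c = 1 ∧
            Algebra.trace (ZMod 2) (GaloisField 2 n) c⁻¹ = 0) ∨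
           (Algebra.trace (ZMod 2) (GaloisField 2 n) c = 0 ∧
            Algebra.trace (ZMod 2) (GaloisField 2 n) c⁻¹ = 1)) :
    comega (GaloisField 2 n) (2 ^ n - 2) c 0 = 2 ^ (n - 1) - 1 ∧
    comega (GaloisField 2 n) (2 ^ n - 2) c 1 = 3 ∧
    comega (GaloisField 2 n) (2 ^ n - 2) c 2 = 2 ^ (n - 1) - 3 ∧
    comega (GaloisField 2 n) (2 ^ n - 2) c 3 = 1 ∧
    (∀ i, 4 ≤ i → comega (GaloisField 2 n) (2 ^ n - 2) c i = 0) ∧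
    (∀ b, cdelta (GaloisField 2 n) (2 ^ n - 2) c b ≤ 3) ∧
    (∃ b, cdelta (GaloisField 2 n) (2 ^ n - 2) c b = 3) := by
  classical
  have := Fintype.ofFinite (GaloisField 2 n)
  have hq : Fintype.card (GaloisField 2 n) = 2 ^ n := by
    rw [← Nat.card_eq_fintype_card, GaloisField.card 2 n (by omega)]
  have h2q : 2 < Fintype.card (GaloisField 2 n) :=
    Fintype.two_lt_card_iff.2 ⟨0, 1, c, zero_ne_one, hc0.symm, Ne.symm hc1⟩
  have hδ (b) : cdelta _ (2 ^ n - 2) c b = invCDelta c b := hq ▸ cdelta_card_sub_two h2q c b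
  obtain ⟨a, haE, ha, hE⟩ := exists_invCDelta_eq_three hc0 hc1 htr
  have hcompl (b) := invCDelta_of_notMem (b := b) hc0
  have hle := le_three_of_eq_three_of_eq_one ha hE hcompl
  have hlt (b) : invCDelta c b < 4 := Nat.lt_succ_of_le (hle b)
  have hcard := card_eq_sum_card_filter_eq _ hlt
  have hsum := sum_eq_sum_mul_card_filter_eq _ hlt
  rw [sum_invCDelta, hq] at hsum
  rw [hq] at hcard
  have h2n : 2 ^ n = 2 * 2 ^ (n - 1) := by
    rw [← pow_succ']
    congr 1
    omega
  simp only [comega_eq_card_filter, hδ, sum_range_succ, sum_range_zero,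
    filter_eq_one_eq_erase ha hE hcompl, filter_eq_three_eq_singleton ha hE hcompl,
    card_erase_of_mem haE, card_zero_one_self_add_one hc0 hc1, card_singleton] at hcard hsum ⊢
  refine ⟨by omega, trivial, by omega, trivial, fun i hi => ?_, hle, a, ha⟩
  exact card_eq_zero.2 (filter_eq_empty_iff.2 fun b _ hb => by have := hle b; omega)
end

section
/- Let n ≥ 2 be an even integer and let G(x) = x^{(3^n + 3)/2} be a power function over GF(3^n). Then the (−1)-differential spectrum of G is given by ω_0 = (3^n − 1)/2, ω_1 = 1, ω_2 = (3^n − 1)/2, and ω_i = 0 for i ≥ 3. (In particular, G is AP(−1)N.) -/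
open Finset

/-!
Since `q ≡ 1 (mod 4)`, `-1` is a square and `z ^ d = χ(z) z²` for the quadratic character `χ`.
In the coordinate `u = x - 1` the differential function becomes
`χ(u + 1) (u + 1)² + χ(u - 1) (u - 1)²`, which equals `-s (u² + 1)` when `χ(u ± 1) = s` agree
and `s u` when they differ. Its value `b` satisfies `χ(b - 1) = χ(u² - 1)`, so two points with
the same value are of the same kind, and then the value determines `u` up to sign, unless the
signs are opposite: `-(u² + 1) = v² + 1` gives `u² + v² = 1`, and then
`(u - 1)(v - 1) = -(u + v - 1)²` would be a square of character `-1`. So every fibre is `{u, -u}`: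
one fibre of size 1 and `(q - 1) / 2` of size 2, and counting points and values gives the spectrum.
-/

section FiberCount

variable {α β : Type*} [Fintype α] [Fintype β] [DecidableEq β]

lemma card_codomain_eq_of_card_fiber_le_two (g : α → β) (hg : ∀ b, #{a | g a = b} ≤ 2) :
    Fintype.card β = #{b | #{a | g a = b} = 0} + #{b | #{a | g a = b} = 1} +
      #{b | #{a | g a = b} = 2} := by
  have := card_eq_sum_card_fiberwise (s := univ) (t := range 3)
    (fun b _ => mem_range.2 (Nat.lt_succ_of_le (hg b)))
  simpa [sum_range_succ] using this

lemma card_domain_eq_of_card_fiber_le_two (g : α → β) (hg : ∀ b, #{a | g a = b} ≤ 2) :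
    Fintype.card α = #{b | #{a | g a = b} = 1} + 2 * #{b | #{a | g a = b} = 2} := by
  rw [← card_univ, card_eq_sum_card_fiberwise (t := univ) (fun a _ => mem_univ (g a)),
    ← sum_fiberwise_of_maps_to (t := range 3) (g := fun b => #{a | g a = b})
      (fun b _ => mem_range.2 (Nat.lt_succ_of_le (hg b)))]
  simp only [sum_range_succ, range_zero, sum_empty]
  rw [sum_const_nat (m := 0) (fun b hb => (mem_filter.1 hb).2),
    sum_const_nat (m := 1) (fun b hb => (mem_filter.1 hb).2),
    sum_const_nat (m := 2) (fun b hb => (mem_filter.1 hb).2)]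
  ring

end FiberCount

section EvenFiber

variable {F β : Type*} [Field F] [Fintype F] [DecidableEq F] [DecidableEq β] {g : F → β}

lemma filter_apply_eq_apply_eq_pair (hg : ∀ u v, g u = g v ↔ v = u ∨ v = -u) (u : F) :
    ({v | g v = g u} : Finset F) = {u, -u} := by
  ext v
  rw [mem_filter, eq_comm, hg]
  simp

lemma card_fiber_le_two (hg : ∀ u v, g u = g v ↔ v = u ∨ v = -u) (b : β) :
    #{v | g v = b} ≤ 2 := by
  by_cases hb : ∃ u, g u = b
  · obtain ⟨u, rfl⟩ := hb
    rw [filter_apply_eq_apply_eq_pair hg]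
    exact card_le_two
  · rw [filter_false_of_mem fun v _ hv => hb ⟨v, hv⟩, card_empty]
    norm_num

lemma card_fiber_apply_of_ne_zero (hg : ∀ u v, g u = g v ↔ v = u ∨ v = -u)
    (hF : ringChar F ≠ 2) {u : F} (hu : u ≠ 0) : #{v | g v = g u} = 2 := by
  rw [filter_apply_eq_apply_eq_pair hg, card_pair]
  intro h
  exact hu ((mul_eq_zero.1 (by linear_combination h : (2 : F) * u = 0)).resolve_left
    (Ring.two_ne_zero hF))

lemma card_filter_card_fiber_eq_one [Fintype β] (hg : ∀ u v, g u = g v ↔ v = u ∨ v = -u)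
    (hF : ringChar F ≠ 2) : #{b | #{v | g v = b} = 1} = 1 := by
  rw [card_eq_one]
  refine ⟨g 0, ?_⟩
  ext b
  simp only [mem_filter, mem_univ, true_and, mem_singleton]
  constructor
  · intro hb
    obtain ⟨u, hu⟩ := card_pos.1 (hb ▸ one_pos)
    obtain rfl := (mem_filter.1 hu).2
    by_contra hu0
    rw [card_fiber_apply_of_ne_zero hg hF fun h => hu0 (h ▸ rfl)] at hb
    exact absurd hb (by norm_num)
  · rintro rfl
    simp [filter_apply_eq_apply_eq_pair hg]

end EvenFiber

lemma ringChar_ne_two_of_charP_three (F : Type*) [Field F] [CharP F 3] : ringChar F ≠ 2 := by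
  rw [ringChar.eq F 3]; norm_num

section QuadraticChar

variable {F : Type*} [Field F] [Fintype F] [DecidableEq F]

lemma pow_card_div_two_add_two (hF : ringChar F ≠ 2) (z : F) :
    z ^ (Fintype.card F / 2 + 2) = quadraticChar F z * z ^ 2 := by
  rw [pow_add, quadraticChar_eq_pow_of_char_ne_two' hF]

lemma quadraticChar_neg_of_isSquare_neg_one (hsq : IsSquare (-1 : F)) (z : F) :
    quadraticChar F (-z) = quadraticChar F z := by
  rw [neg_eq_neg_one_mul, map_mul,
    (quadraticChar_one_iff_isSquare (neg_ne_zero.2 one_ne_zero)).2 hsq, one_mul]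

lemma neg_pow_card_div_two_add_two (hF : ringChar F ≠ 2) (hsq : IsSquare (-1 : F)) (z : F) :
    (-z) ^ (Fintype.card F / 2 + 2) = z ^ (Fintype.card F / 2 + 2) := by
  rw [pow_card_div_two_add_two hF, pow_card_div_two_add_two hF,
    quadraticChar_neg_of_isSquare_neg_one hsq, neg_sq]

lemma quadraticChar_ne_neg_one_of_isSquare {a : F} (ha : IsSquare a) :
    quadraticChar F a ≠ -1 :=
  fun h => quadraticChar_neg_one_iff_not_isSquare.1 h ha

lemma quadraticChar_sub_one_eq_mul {u : F} (hu : u + 1 ≠ 0) :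
    quadraticChar F (u - 1) = quadraticChar F (u ^ 2 - 1) * quadraticChar F (u + 1) := by
  rw [show u ^ 2 - 1 = (u - 1) * (u + 1) by ring, map_mul, mul_assoc, ← sq,
    quadraticChar_sq_one hu, mul_one]

end QuadraticChar

section CharThree

variable {F : Type*} [Field F] [Fintype F]

/-- In characteristic 3 this is `Δ₋₁(u + 1) = (u + 2) ^ d + (u + 1) ^ d` for
`d = (q + 3) / 2 = q / 2 + 2`; recentring at `x = 1` turns the symmetry `x ↦ -1 - x` of `Δ₋₁`
into `u ↦ -u`. -/
noncomputable def centeredDiff (u : F) : F :=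
  (u + 1) ^ (Fintype.card F / 2 + 2) + (u - 1) ^ (Fintype.card F / 2 + 2)

variable [DecidableEq F] [CharP F 3]

lemma centeredDiff_eq (u : F) :
    centeredDiff u = quadraticChar F (u + 1) * (u + 1) ^ 2 +
      quadraticChar F (u - 1) * (u - 1) ^ 2 := by
  simp only [centeredDiff, pow_card_div_two_add_two (ringChar_ne_two_of_charP_three F)]

lemma centeredDiff_neg (hsq : IsSquare (-1 : F)) (u : F) : centeredDiff (-u) = centeredDiff u := by
  have hF := ringChar_ne_two_of_charP_three F
  rw [centeredDiff, centeredDiff, show -u + 1 = -(u - 1) by ring, show -u - 1 = -(u + 1) by ring,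
    neg_pow_card_div_two_add_two hF hsq, neg_pow_card_div_two_add_two hF hsq, add_comm]

lemma centeredDiff_of_quadraticChar_eq {u : F}
    (h : quadraticChar F (u - 1) = quadraticChar F (u + 1)) :
    centeredDiff u = -quadraticChar F (u + 1) * (u ^ 2 + 1) := by
  rw [centeredDiff_eq, h]
  linear_combination (quadraticChar F (u + 1) : F) * (u ^ 2 + 1) * CharP.ofNat_eq_zero F 3

lemma centeredDiff_of_quadraticChar_eq_neg {u : F}
    (h : quadraticChar F (u - 1) = -quadraticChar F (u + 1)) :
    centeredDiff u = quadraticChar F (u + 1) * u := by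
  rw [centeredDiff_eq, h]
  push_cast
  linear_combination (quadraticChar F (u + 1) : F) * u * CharP.ofNat_eq_zero F 3

lemma centeredDiff_one (hsq : IsSquare (-1 : F)) : centeredDiff (1 : F) = 1 := by
  have hd : Fintype.card F / 2 + 2 ≠ 0 := by omega
  rw [centeredDiff, sub_self, zero_pow hd, add_zero,
    show (1 + 1 : F) = -1 by linear_combination CharP.ofNat_eq_zero F 3,
    neg_pow_card_div_two_add_two (ringChar_ne_two_of_charP_three F) hsq, one_pow]

lemma quadraticChar_centeredDiff_sub_one (hsq : IsSquare (-1 : F)) (u : F) :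
    quadraticChar F (centeredDiff u - 1) = quadraticChar F (u ^ 2 - 1) := by
  have h3 := CharP.ofNat_eq_zero F 3
  by_cases hu : u ^ 2 - 1 = 0
  · rcases sq_eq_one_iff.1 (sub_eq_zero.1 hu) with rfl | rfl
    · rw [centeredDiff_one hsq, hu, sub_self]
    · rw [centeredDiff_neg hsq, centeredDiff_one hsq, hu, sub_self]
  have hp : u + 1 ≠ 0 := fun h => hu (by linear_combination (u - 1) * h)
  have hm : u - 1 ≠ 0 := fun h => hu (by linear_combination (u + 1) * h)
  rw [show u ^ 2 - 1 = (u + 1) * (u - 1) by ring, map_mul, centeredDiff_eq]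
  rcases quadraticChar_dichotomy hp with hp' | hp' <;>
    rcases quadraticChar_dichotomy hm with hm' | hm' <;> rw [hp', hm'] <;> push_cast
  · rw [show (1 : F) * (u + 1) ^ 2 + 1 * (u - 1) ^ 2 - 1 = -((u + 1) * (u - 1)) by
        linear_combination u ^ 2 * h3,
      quadraticChar_neg_of_isSquare_neg_one hsq, map_mul, hp', hm']; rfl
  · rw [show (1 : F) * (u + 1) ^ 2 + -1 * (u - 1) ^ 2 - 1 = u - 1 by linear_combination u * h3, hm']
  · rw [show -1 * (u + 1) ^ 2 + 1 * (u - 1) ^ 2 - 1 = -(u + 1) by linear_combination -u * h3,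
      quadraticChar_neg_of_isSquare_neg_one hsq, hp']
  · have hu0 : u ≠ 0 := by rintro rfl; simp at hp'
    rw [show -1 * (u + 1) ^ 2 + -1 * (u - 1) ^ 2 - 1 = u ^ 2 by linear_combination -(u ^ 2 + 1) * h3,
      quadraticChar_sq_one' hu0]

lemma centeredDiff_eq_one_iff (hsq : IsSquare (-1 : F)) {u : F} :
    centeredDiff u = 1 ↔ u = 1 ∨ u = -1 := by
  refine ⟨fun h => sq_eq_one_iff.1 (sub_eq_zero.1 ?_), ?_⟩
  · rw [← quadraticChar_eq_zero_iff, ← quadraticChar_centeredDiff_sub_one hsq, h, sub_self,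
      quadraticChar_zero]
  · rintro (rfl | rfl)
    · exact centeredDiff_one hsq
    · rw [centeredDiff_neg hsq, centeredDiff_one hsq]

lemma sq_add_sq_ne_one (hsq : IsSquare (-1 : F)) {u v : F}
    (h : quadraticChar F (u - 1) * quadraticChar F (v - 1) = -1) : u ^ 2 + v ^ 2 ≠ 1 := by
  intro huv
  have hsq' : IsSquare ((u - 1) * (v - 1)) := by
    rw [show (u - 1) * (v - 1) = -1 * (u + v - 1) ^ 2 by
      linear_combination (u * v - u - v + 1) * CharP.ofNat_eq_zero F 3 + huv]
    exact hsq.mul (IsSquare.sq _)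
  exact quadraticChar_ne_neg_one_of_isSquare hsq' (by rw [map_mul, h])

lemma eq_or_eq_neg_of_centeredDiff_eq_of_quadraticChar_eq (hsq : IsSquare (-1 : F)) {u v : F}
    (hu0 : u + 1 ≠ 0) (hv0 : v + 1 ≠ 0) (hu : quadraticChar F (u - 1) = quadraticChar F (u + 1))
    (hv : quadraticChar F (v - 1) = quadraticChar F (v + 1)) (h : centeredDiff u = centeredDiff v) :
    v = u ∨ v = -u := by
  have h3 := CharP.ofNat_eq_zero F 3
  rw [centeredDiff_of_quadraticChar_eq hu, centeredDiff_of_quadraticChar_eq hv] at h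
  rcases quadraticChar_dichotomy hu0 with hs | hs <;>
    rcases quadraticChar_dichotomy hv0 with ht | ht <;> rw [hs, ht] at h <;> push_cast at h
  · exact sq_eq_sq_iff_eq_or_eq_neg.1 (by linear_combination h)
  · exact (sq_add_sq_ne_one hsq (u := u) (v := v) (by rw [hu, hv, hs, ht]; rfl)
      (by linear_combination -h - h3)).elim
  · exact (sq_add_sq_ne_one hsq (u := u) (v := v) (by rw [hu, hv, hs, ht]; rfl)
      (by linear_combination h - h3)).elim
  · exact sq_eq_sq_iff_eq_or_eq_neg.1 (by linear_combination -h)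

lemma eq_or_eq_neg_of_centeredDiff_eq_of_quadraticChar_eq_neg {u v : F}
    (hu0 : u + 1 ≠ 0) (hv0 : v + 1 ≠ 0) (hu : quadraticChar F (u - 1) = -quadraticChar F (u + 1))
    (hv : quadraticChar F (v - 1) = -quadraticChar F (v + 1)) (h : centeredDiff u = centeredDiff v) :
    v = u ∨ v = -u := by
  rw [centeredDiff_of_quadraticChar_eq_neg hu, centeredDiff_of_quadraticChar_eq_neg hv] at h
  have hs : ((quadraticChar F (u + 1) : ℤ) : F) ^ 2 = 1 := by
    rw [← Int.cast_pow, quadraticChar_sq_one hu0, Int.cast_one]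
  have ht : ((quadraticChar F (v + 1) : ℤ) : F) ^ 2 = 1 := by
    rw [← Int.cast_pow, quadraticChar_sq_one hv0, Int.cast_one]
  exact sq_eq_sq_iff_eq_or_eq_neg.1 (by
    linear_combination -((quadraticChar F (u + 1) : F) * u + (quadraticChar F (v + 1) : F) * v) * h
      + u ^ 2 * hs - v ^ 2 * ht)

theorem centeredDiff_eq_centeredDiff_iff (hsq : IsSquare (-1 : F)) {u v : F} :
    centeredDiff u = centeredDiff v ↔ v = u ∨ v = -u := by
  refine ⟨fun h => ?_, by rintro (rfl | rfl) <;> simp [centeredDiff_neg hsq]⟩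
  have hχ : quadraticChar F (u ^ 2 - 1) = quadraticChar F (v ^ 2 - 1) := by
    rw [← quadraticChar_centeredDiff_sub_one hsq, h, quadraticChar_centeredDiff_sub_one hsq]
  by_cases hu : u ^ 2 - 1 = 0
  · have hv : v ^ 2 - 1 = 0 := by rwa [← quadraticChar_eq_zero_iff, ← hχ, quadraticChar_eq_zero_iff]
    exact sq_eq_sq_iff_eq_or_eq_neg.1 (by linear_combination hv - hu)
  have hv : v ^ 2 - 1 ≠ 0 := by rwa [← quadraticChar_eq_zero_iff.ne, ← hχ, quadraticChar_eq_zero_iff.ne]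
  have hu0 : u + 1 ≠ 0 := fun h' => hu (by linear_combination (u - 1) * h')
  have hv0 : v + 1 ≠ 0 := fun h' => hv (by linear_combination (v - 1) * h')
  rcases quadraticChar_dichotomy hu with h1 | h1
  · exact eq_or_eq_neg_of_centeredDiff_eq_of_quadraticChar_eq hsq hu0 hv0
      (by rw [quadraticChar_sub_one_eq_mul hu0, h1, one_mul])
      (by rw [quadraticChar_sub_one_eq_mul hv0, ← hχ, h1, one_mul]) h
  · exact eq_or_eq_neg_of_centeredDiff_eq_of_quadraticChar_eq_neg hu0 hv0
      (by rw [quadraticChar_sub_one_eq_mul hu0, h1, neg_one_mul])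
      (by rw [quadraticChar_sub_one_eq_mul hv0, ← hχ, h1, neg_one_mul]) h

lemma cdelta_neg_one_eq_card (b : F) :
    cdelta F (Fintype.card F / 2 + 2) (-1) b = #{u | centeredDiff u = b} := by
  rw [cdelta, Nat.card_eq_fintype_card, ← Fintype.card_subtype]
  refine Fintype.card_congr (Equiv.subtypeEquiv (Equiv.subRight 1) fun x => ?_)
  rw [Equiv.subRight_apply, centeredDiff, sub_add_cancel,
    show x - 1 - 1 = x + 1 by linear_combination -CharP.ofNat_eq_zero F 3, neg_one_mul,
    sub_neg_eq_add, add_comm]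

lemma comega_neg_one_eq_card (i : ℕ) :
    comega F (Fintype.card F / 2 + 2) (-1) i = #{b : F | #{u : F | centeredDiff u = b} = i} := by
  rw [comega, Nat.card_eq_fintype_card, ← Fintype.card_subtype]
  exact Fintype.card_congr (Equiv.subtypeEquivRight fun b => by rw [cdelta_neg_one_eq_card])

end CharThree

theorem stmt_11_general (n : ℕ) (hne : Even n)
    (F : Type*) [Field F] [Fintype F] (hF : Fintype.card F = 3 ^ n) :
    comega F ((3 ^ n + 3) / 2) (-1 : F) 0 = (3 ^ n - 1) / 2 ∧
    comega F ((3 ^ n + 3) / 2) (-1 : F) 1 = 1 ∧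
    comega F ((3 ^ n + 3) / 2) (-1 : F) 2 = (3 ^ n - 1) / 2 ∧
    (∀ i, 3 ≤ i → comega F ((3 ^ n + 3) / 2) (-1 : F) i = 0) ∧
    (∀ b, cdelta F ((3 ^ n + 3) / 2) (-1 : F) b ≤ 2) ∧
    (∃ b, cdelta F ((3 ^ n + 3) / 2) (-1 : F) b = 2) := by
  classical
  have : Fact (Nat.Prime 3) := ⟨Nat.prime_three⟩
  have : CharP F 3 := charP_of_card_eq_prime_pow hF
  have hF2 := ringChar_ne_two_of_charP_three F
  have hsq : IsSquare (-1 : F) := by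
    obtain ⟨m, rfl⟩ := hne
    rw [FiniteField.isSquare_neg_one_iff, hF, ← two_mul, pow_mul, Nat.pow_mod]
    norm_num
  have hd : (3 ^ n + 3) / 2 = Fintype.card F / 2 + 2 := by
    obtain ⟨k, hk⟩ := Odd.pow (n := n) (by decide : Odd 3)
    omega
  have hg : ∀ u v : F, centeredDiff u = centeredDiff v ↔ v = u ∨ v = -u :=
    fun _ _ => centeredDiff_eq_centeredDiff_iff hsq
  have hle := card_fiber_le_two hg
  have hone := card_filter_card_fiber_eq_one hg hF2
  have hcod := card_codomain_eq_of_card_fiber_le_two _ hle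
  have hdom := card_domain_eq_of_card_fiber_le_two _ hle
  simp only [hd, comega_neg_one_eq_card, cdelta_neg_one_eq_card]
  refine ⟨by omega, hone, by omega, fun i hi => ?_, hle,
    ⟨_, card_fiber_apply_of_ne_zero hg hF2 one_ne_zero⟩⟩
  exact card_eq_zero.2 (filter_false_of_mem fun b _ => by have := hle b; omega)

theorem stmt_11 (n : ℕ) (hn : 2 ≤ n) (hne : Even n)
    (F : Type*) [Field F] [Fintype F] (hF : Fintype.card F = 3 ^ n) :
    comega F ((3 ^ n + 3) / 2) (-1 : F) 0 = (3 ^ n - 1) / 2 ∧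
    comega F ((3 ^ n + 3) / 2) (-1 : F) 1 = 1 ∧
    comega F ((3 ^ n + 3) / 2) (-1 : F) 2 = (3 ^ n - 1) / 2 ∧
    (∀ i, 3 ≤ i → comega F ((3 ^ n + 3) / 2) (-1 : F) i = 0) ∧
    (∀ b, cdelta F ((3 ^ n + 3) / 2) (-1 : F) b ≤ 2) ∧
    (∃ b, cdelta F ((3 ^ n + 3) / 2) (-1 : F) b = 2) :=
  stmt_11_general n hne F hF
end
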